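/- For any real x with 0 ≤ x < 1/2 and any N ≥ 1, if X_1,…,X_N are i.i.d. Rademacher random variables (taking values ±1 with probability 1/2 each), then E[exp(x·((X_1+⋯+X_N)/√N)²)] ≤ 1/√(1−2x). -/

import Mathlib

open Real MeasureTheory

noncomputable section

lemma integrable_gauss_lin (b c : ℝ) (hb : 0 < b) :
    Integrable (fun t : ℝ => Real.exp (-b * t ^ 2 + c * t)) := by
  have h : ∀ t : ℝ, -b * t ^ 2 + c * t
      = c ^ 2 / (4 * b) + -b * (t - c / (2 * b)) ^ 2 := by
    intro t; field_simp; ring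
  simp_rw [h, Real.exp_add]
  exact (((integrable_exp_neg_mul_sq hb).comp_sub_right (c / (2 * b)))).const_mul _

lemma integral_gauss_lin (b c : ℝ) (hb : 0 < b) :
    ∫ t : ℝ, Real.exp (-b * t ^ 2 + c * t)
      = Real.sqrt (π / b) * Real.exp (c ^ 2 / (4 * b)) := by
  have h : ∀ t : ℝ, -b * t ^ 2 + c * t
      = c ^ 2 / (4 * b) + -b * (t - c / (2 * b)) ^ 2 := by
    intro t; field_simp; ring
  simp_rw [h, Real.exp_add]
  rw [MeasureTheory.integral_const_mul,
    integral_sub_right_eq_self (fun t : ℝ => Real.exp (-b * t ^ 2)) (c / (2 * b)),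
    integral_gaussian]
  ring

/-- Spin value of a boolean: `true ↦ 1`, `false ↦ -1`. -/
def spin (b : Bool) : ℝ := if b then 1 else -1

set_option maxHeartbeats 1000000 in
/-- The expectation under `N` i.i.d. Rademacher variables (uniform on `{±1}^N`) of
`exp(x ((X₁+⋯+X_N)/√N)²)` is at most `1/√(1-2x)` for `0 ≤ x < 1/2`. -/
theorem rademacher_mgf_bound (N : ℕ) (hN : 1 ≤ N) (x : ℝ) (hx0 : 0 ≤ x) (hx : x < 1 / 2) :
    ((2 : ℝ) ^ N)⁻¹ *
        ∑ X : Fin N → Bool,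
          Real.exp (x * ((∑ i, spin (X i)) / Real.sqrt N) ^ 2) ≤
      1 / Real.sqrt (1 - 2 * x) := by
  have hN0 : (0:ℝ) < N := by exact_mod_cast hN
  set c : ℝ := Real.sqrt (2 * x) / Real.sqrt N with hc
  have hc2 : c ^ 2 = 2 * x / N := by
    rw [hc, div_pow, sq_sqrt (by linarith), sq_sqrt hN0.le]
  have hhalf : (0:ℝ) < 1 / 2 := by norm_num
  -- key identity per configuration X
  have key : ∀ X : Fin N → Bool,
      Real.exp (x * ((∑ i, spin (X i)) / Real.sqrt N) ^ 2)
        = (Real.sqrt (2 * π))⁻¹ *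
            ∫ t : ℝ, Real.exp (-(1/2) * t ^ 2 + (c * ∑ i, spin (X i)) * t) := by
    intro X
    set s : ℝ := ∑ i, spin (X i)
    have h1 : ∫ t : ℝ, Real.exp (-(1/2) * t ^ 2 + (c * s) * t)
        = Real.sqrt (π / (1/2)) * Real.exp ((c * s) ^ 2 / (4 * (1/2))) := by
      simpa using integral_gauss_lin (1/2) (c * s) hhalf
    rw [h1]
    have h2 : (c * s) ^ 2 / (4 * (1/2)) = x * (s / Real.sqrt N) ^ 2 := by
      rw [mul_pow, hc2, div_pow, sq_sqrt hN0.le]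
      field_simp
      ring
    have h3 : Real.sqrt (π / (1/2)) = Real.sqrt (2 * π) := by norm_num; ring_nf
    rw [h2, h3, ← mul_assoc, inv_mul_cancel₀ (by positivity), one_mul]
  simp_rw [key]
  rw [← Finset.mul_sum, ← mul_assoc, mul_comm (((2:ℝ)^N)⁻¹) _, mul_assoc]
  have hintX : ∀ X ∈ (Finset.univ : Finset (Fin N → Bool)),
      Integrable (fun t : ℝ => Real.exp (-(1/2) * t ^ 2 + (c * ∑ i, spin (X i)) * t)) :=
    fun X _ => integrable_gauss_lin _ _ hhalf
  rw [← integral_finset_sum _ hintX, ← MeasureTheory.integral_const_mul]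
  -- the function under the integral
  have hfun : ∀ t : ℝ,
      ((2:ℝ)^N)⁻¹ * ∑ X : Fin N → Bool,
          Real.exp (-(1/2) * t ^ 2 + (c * ∑ i, spin (X i)) * t)
        = Real.exp (-(1/2) * t ^ 2) * Real.cosh (c * t) ^ N := by
    intro t
    have e1 : ∀ X : Fin N → Bool,
        Real.exp (-(1/2) * t ^ 2 + (c * ∑ i, spin (X i)) * t)
          = Real.exp (-(1/2) * t ^ 2) * ∏ i, Real.exp ((c * t) * spin (X i)) := by
      intro X
      rw [← Real.exp_sum, ← Real.exp_add]
      congr 1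
      rw [← Finset.mul_sum]
      ring
    simp_rw [e1, ← Finset.mul_sum]
    have e2 : (∑ X : Fin N → Bool, ∏ i, Real.exp ((c * t) * spin (X i)))
        = (∑ b : Bool, Real.exp ((c * t) * spin b)) ^ N := (Fintype.sum_pow (fun b : Bool => Real.exp ((c * t) * spin b)) N).symm
    have e3 : (∑ b : Bool, Real.exp ((c * t) * spin b)) = 2 * Real.cosh (c * t) := by
      simp [spin, Real.cosh_eq]
      ring
    rw [e2, e3, mul_pow]
    have h2N : ((2:ℝ)^N) ≠ 0 := by positivity
    field_simp
  have hbound : ∀ t : ℝ,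
      Real.exp (-(1/2) * t ^ 2) * Real.cosh (c * t) ^ N
        ≤ Real.exp (-(1/2 - x) * t ^ 2) := by
    intro t
    have h1 : Real.cosh (c * t) ^ N ≤ Real.exp ((c * t) ^ 2 / 2) ^ N :=
      pow_le_pow_left₀ (Real.cosh_pos _).le (Real.cosh_le_exp_half_sq _) N
    have h2 : Real.exp ((c * t) ^ 2 / 2) ^ N = Real.exp (x * t ^ 2) := by
      rw [← Real.exp_nat_mul]
      congr 1
      have hNne : (N:ℝ) ≠ 0 := hN0.ne'
      rw [mul_pow, hc2]
      field_simp
    calc Real.exp (-(1/2) * t ^ 2) * Real.cosh (c * t) ^ N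
        ≤ Real.exp (-(1/2) * t ^ 2) * Real.exp (x * t ^ 2) := by
          rw [← h2] at *; exact mul_le_mul_of_nonneg_left h1 (Real.exp_nonneg _)
      _ = Real.exp (-(1/2 - x) * t ^ 2) := by rw [← Real.exp_add]; ring_nf
  have hbx : (0:ℝ) < 1/2 - x := by linarith
  have hint2 : Integrable (fun t : ℝ => ((2:ℝ)^N)⁻¹ * ∑ X : Fin N → Bool,
      Real.exp (-(1/2) * t ^ 2 + (c * ∑ i, spin (X i)) * t)) :=
    (integrable_finset_sum _ hintX).const_mul _
  have hmono : (∫ t : ℝ, ((2:ℝ)^N)⁻¹ * ∑ X : Fin N → Bool,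
        Real.exp (-(1/2) * t ^ 2 + (c * ∑ i, spin (X i)) * t))
      ≤ ∫ t : ℝ, Real.exp (-(1/2 - x) * t ^ 2) := by
    refine integral_mono hint2 (integrable_exp_neg_mul_sq hbx) ?_
    intro t
    dsimp only
    rw [hfun t]
    exact hbound t
  rw [integral_gaussian] at hmono
  calc (Real.sqrt (2 * π))⁻¹ * ∫ t : ℝ, ((2:ℝ)^N)⁻¹ * ∑ X : Fin N → Bool,
          Real.exp (-(1/2) * t ^ 2 + (c * ∑ i, spin (X i)) * t)
      ≤ (Real.sqrt (2 * π))⁻¹ * Real.sqrt (π / (1/2 - x)) := by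
        exact mul_le_mul_of_nonneg_left hmono (by positivity)
    _ = 1 / Real.sqrt (1 - 2 * x) := by
        rw [← Real.sqrt_inv, ← Real.sqrt_mul (by positivity)]
        have hpi : (0:ℝ) < π := Real.pi_pos
        have hb1 : (0:ℝ) < 1 - 2*x := by linarith
        have h9 : (2 * π)⁻¹ * (π / (1/2 - x)) = (1 - 2*x)⁻¹ := by
          rw [show (1:ℝ)/2 - x = (1 - 2*x)/2 by ring]
          field_simp
        rw [h9, Real.sqrt_inv, one_div]
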